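/- arXiv:2211.09793 — 6 statements merged into one kernel-verified Lean document; each statement's English description precedes it below -/
import Mathlib

section
/- Let R be a commutative ring, let k ≥ 2, and let h_1, …, h_k, τ ∈ R satisfy h_i² + τ·h_i = 0 for every i = 1, …, k. Then ∏_{i=1}^{k-1} (h_i + h_{i+1} + τ) = ∑_{j=0}^{k-1} τ^{k-1-j} · e_j(h_1, …, h_k), where e_j denotes the j-th elementary symmetric polynomial in k variables (with e_0 = 1). -/
/-!
Write `P n = ∏_{i<n} (h_i + h_{i+1} + τ)` and `Q n = ∑_{j≤n} τ^{n-j} e_j(h_0, …, h_n)`. Both start at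
`1` and obey `X (n+1) = (τ + h_{n+1}) X n + h_0 ⋯ h_n`. For `Q` this is Pascal's rule
`e_{j+1}(h_0, …, h_{n+1}) = e_{j+1}(h_0, …, h_n) + h_{n+1} e_j(h_0, …, h_n)`. For `P` it is
`h_{n+1} + h_n + τ = (τ + h_{n+1}) + h_n` together with `h_n P n = h_0 ⋯ h_n`, which follows from
`h_{i+1} (h_i + h_{i+1} + τ) = h_i h_{i+1}`, i.e. from the relation `h_{i+1}² + τ h_{i+1} = 0`.
-/

open Finset

theorem Finset.sum_powersetCard_succ_insert_prod {ι R : Type*} [DecidableEq ι] [CommSemiring R]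
    {s : Finset ι} {a : ι} (ha : a ∉ s) (f : ι → R) (j : ℕ) :
    ∑ t ∈ powersetCard (j + 1) (insert a s), ∏ i ∈ t, f i =
      ∑ t ∈ powersetCard (j + 1) s, ∏ i ∈ t, f i + f a * ∑ t ∈ powersetCard j s, ∏ i ∈ t, f i := by
  have not_mem {t : Finset ι} {m : ℕ} (ht : t ∈ powersetCard m s) : a ∉ t :=
    fun hat => ha ((mem_powersetCard.mp ht).1 hat)
  have disjoint : Disjoint (powersetCard (j + 1) s) ((powersetCard j s).image (insert a)) := by
    refine disjoint_left.mpr fun t ht ht' => ?_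
    obtain ⟨u, -, rfl⟩ := mem_image.mp ht'
    exact not_mem ht (mem_insert_self a u)
  have inj : Set.InjOn (insert a) (powersetCard j s : Set (Finset ι)) := fun t ht u hu htu => by
    rw [← erase_insert (not_mem ht), ← erase_insert (not_mem hu), htu]
  rw [powersetCard_succ_insert ha, sum_union disjoint, sum_image inj, mul_sum]
  exact congrArg _ (sum_congr rfl fun t ht => prod_insert (not_mem ht))

section

variable {R : Type*} [CommSemiring R] (τ : R) (h : ℕ → R)

/-- `e_j(h_0, …, h_{n-1})`. -/
def esymmRange (n j : ℕ) : R :=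
  ∑ t ∈ powersetCard j (range n), ∏ i ∈ t, h i

@[simp]
theorem esymmRange_zero (n : ℕ) : esymmRange h n 0 = 1 := by
  simp [esymmRange]

theorem esymmRange_self (n : ℕ) : esymmRange h n n = ∏ i ∈ range n, h i := by
  have h_self := powersetCard_self (range n)
  rw [card_range] at h_self
  rw [esymmRange, h_self, sum_singleton]

theorem esymmRange_succ_succ (n j : ℕ) :
    esymmRange h (n + 1) (j + 1) = esymmRange h n (j + 1) + h n * esymmRange h n j := by
  rw [esymmRange, range_add_one, sum_powersetCard_succ_insert_prod notMem_range_self]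
  rfl

def esymmPartialSum (n m : ℕ) : R :=
  ∑ j ∈ range (m + 1), τ ^ (m - j) * esymmRange h n j

theorem esymmPartialSum_succ_right (n m : ℕ) :
    esymmPartialSum τ h n (m + 1) = τ * esymmPartialSum τ h n m + esymmRange h n (m + 1) := by
  rw [esymmPartialSum, sum_range_succ, esymmPartialSum, mul_sum, Nat.sub_self, pow_zero, one_mul]
  congr 1
  refine sum_congr rfl fun j hj => ?_
  rw [Nat.sub_add_comm (Nat.le_of_lt_succ (mem_range.mp hj)), pow_succ]
  ring

theorem esymmPartialSum_succ_succ (n m : ℕ) :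
    esymmPartialSum τ h (n + 1) (m + 1) =
      esymmPartialSum τ h n (m + 1) + h n * esymmPartialSum τ h n m := by
  rw [esymmPartialSum, sum_range_succ' _ (m + 1), esymmPartialSum, sum_range_succ' _ (m + 1),
    esymmPartialSum, mul_sum]
  simp only [esymmRange_succ_succ, Nat.add_sub_add_right, esymmRange_zero, mul_add, sum_add_distrib,
    mul_left_comm (h n)]
  abel

theorem esymmPartialSum_succ_self (n : ℕ) :
    esymmPartialSum τ h (n + 2) (n + 1) =
      (τ + h (n + 1)) * esymmPartialSum τ h (n + 1) n + ∏ i ∈ range (n + 1), h i := by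
  rw [esymmPartialSum_succ_succ, esymmPartialSum_succ_right, esymmRange_self]
  ring

end

section

variable {R : Type*} [CommRing R] (τ : R) (h : ℕ → R)

theorem mul_prod_range_add_add (n : ℕ) (hrel : ∀ i ≤ n, h i ^ 2 + τ * h i = 0) :
    h n * ∏ i ∈ range n, (h i + h (i + 1) + τ) = ∏ i ∈ range (n + 1), h i := by
  induction n with
  | zero => simp
  | succ n ih =>
    rw [prod_range_succ, prod_range_succ (n := n + 1), ← ih fun i hi => hrel i (by omega)]
    linear_combination (∏ i ∈ range n, (h i + h (i + 1) + τ)) * hrel (n + 1) le_rfl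

theorem prod_range_add_add_eq_esymmPartialSum (n : ℕ) (hrel : ∀ i ≤ n, h i ^ 2 + τ * h i = 0) :
    ∏ i ∈ range n, (h i + h (i + 1) + τ) = esymmPartialSum τ h (n + 1) n := by
  induction n with
  | zero => simp [esymmPartialSum]
  | succ n ih =>
    have hrel' : ∀ i ≤ n, h i ^ 2 + τ * h i = 0 := fun i hi => hrel i (by omega)
    rw [esymmPartialSum_succ_self, ← ih hrel', ← mul_prod_range_add_add τ h n hrel',
      prod_range_succ]
    ring

end

theorem stmt_2 {R : Type*} [CommRing R] (k : ℕ) (hk : 2 ≤ k) (h : ℕ → R) (τ : R)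
    (hrel : ∀ i < k, h i ^ 2 + τ * h i = 0) :
    ∏ i ∈ Finset.range (k - 1), (h i + h (i + 1) + τ) =
      ∑ j ∈ Finset.range k, τ ^ (k - 1 - j) *
        ∑ t ∈ Finset.powersetCard j (Finset.range k), ∏ i ∈ t, h i := by
  obtain ⟨n, rfl⟩ : ∃ n, k = n + 1 := ⟨k - 1, by omega⟩
  exact prod_range_add_add_eq_esymmPartialSum τ h n fun i hi => hrel i (by omega)
end

section
/- Let k be a field of characteristic ≠ 2 and let σ be a k-algebra involution of the formal power series ring k[[t]]. Write σ(t) = ξ·t + (higher order terms) with ξ ∈ k; then ξ² = 1. Define φ : k[[t]] → k[[t]] by φ(t) = (t + ξ·σ(t))/2. Then φ is a k-algebra automorphism of k[[t]], and the conjugate involution σ' := φ⁻¹ ∘ σ ∘ φ satisfies σ'(t) = ξ·t. -/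
/-!
An automorphism σ of `k⟦X⟧` fixes the maximal ideal `(X)`, so it acts on linear coefficients
by multiplication with `ξ = coeff 1 (σ X)`; applying this to `σ (σ X) = X` gives `ξ² = 1`.
Hence `g = (X + ξ σ(X)) / 2` satisfies `σ g = ξ g` and has linear coefficient `1`, so
substituting `g` for `X` is an automorphism `φ`, and `φ⁻¹ (σ (φ X)) = φ⁻¹ (ξ φ X) = ξ X`.
-/

namespace PowerSeries

variable {R : Type*} [CommRing R]

noncomputable def substAlgEquiv (P : R⟦X⟧) (hP : constantCoeff P = 0)
    (hP' : IsUnit (coeff 1 P)) : R⟦X⟧ ≃ₐ[R] R⟦X⟧ :=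
  { substAlgHom (HasSubst.of_constantCoeff_zero' hP) with
    invFun := subst (P.substInvOfIsUnit hP')
    left_inv := fun f => by
      simp only [AlgHom.toFun_eq_coe, coe_substAlgHom]
      rw [subst_comp_subst_apply (.of_constantCoeff_zero' hP) (.substInvOfIsUnit P hP'),
        subst_substInvOfIsUnit_right P hP hP', X_subst]
    right_inv := fun f => by
      simp only [AlgHom.toFun_eq_coe, coe_substAlgHom]
      rw [subst_comp_subst_apply (.substInvOfIsUnit P hP') (.of_constantCoeff_zero' hP),
        subst_substInvOfIsUnit_left P hP hP', X_subst] }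

theorem substAlgEquiv_X (P : R⟦X⟧) (hP : constantCoeff P = 0) (hP' : IsUnit (coeff 1 P)) :
    substAlgEquiv P hP hP' X = P :=
  substAlgHom_X (.of_constantCoeff_zero' hP)

variable {F : Type*} [FunLike F R⟦X⟧ R⟦X⟧] [AlgHomClass F R R⟦X⟧ R⟦X⟧]

theorem constantCoeff_map_of_constantCoeff_map_X_eq_zero (σ : F) (hσ : constantCoeff (σ X) = 0)
    (f : R⟦X⟧) : constantCoeff (σ f) = constantCoeff f := by
  have hC (a : R) : σ (C a) = C a := AlgHomClass.commutes σ a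
  rw [eq_X_mul_shift_add_const f]
  simp [hC, hσ]

theorem coeff_one_map_of_constantCoeff_map_X_eq_zero (σ : F) (hσ : constantCoeff (σ X) = 0)
    (f : R⟦X⟧) : coeff 1 (σ f) = coeff 1 f * coeff 1 (σ X) := by
  have hC (a : R) : σ (C a) = C a := AlgHomClass.commutes σ a
  conv_lhs => rw [eq_X_mul_shift_add_const f]
  simp [hC, coeff_one_mul, hσ, constantCoeff_map_of_constantCoeff_map_X_eq_zero σ hσ, mul_comm]

theorem constantCoeff_map_X_eq_zero {k : Type*} [Field k] {F : Type*} [EquivLike F k⟦X⟧ k⟦X⟧]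
    [MulEquivClass F k⟦X⟧ k⟦X⟧] (σ : F) : constantCoeff (σ X) = 0 := by
  by_contra h
  have hX : IsUnit (X : k⟦X⟧) :=
    (isUnit_map_iff σ X).mp (isUnit_iff_constantCoeff.mpr (isUnit_iff_ne_zero.mpr h))
  simpa using isUnit_constantCoeff _ hX

end PowerSeries

open PowerSeries in
theorem stmt_5 {k : Type*} [Field k] (hchar : (2 : k) ≠ 0)
    (σ : PowerSeries k ≃ₐ[k] PowerSeries k)
    (hσ : ∀ f : PowerSeries k, σ (σ f) = f)
    (ξ : k) (hξ : ξ = PowerSeries.coeff 1 (σ PowerSeries.X)) :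
    ξ ^ 2 = 1 ∧
      ∃ φ : PowerSeries k ≃ₐ[k] PowerSeries k,
        φ PowerSeries.X =
          (2 : k)⁻¹ • (PowerSeries.X + PowerSeries.C ξ * σ PowerSeries.X) ∧
        φ.symm (σ (φ PowerSeries.X)) = PowerSeries.C ξ * PowerSeries.X := by
  have hσX := constantCoeff_map_X_eq_zero σ
  have hξ2 : ξ ^ 2 = 1 := by
    have := coeff_one_map_of_constantCoeff_map_X_eq_zero σ hσX (σ X)
    rwa [hσ, coeff_one_X, ← hξ, ← sq, eq_comm] at this
  set g : k⟦X⟧ := (2 : k)⁻¹ • (X + C ξ * σ X)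
  have hg0 : constantCoeff g = 0 := by simp [g, hσX]
  have hg1 : coeff 1 g = 1 := by
    simp [g, ← hξ, ← sq, hξ2, ← two_mul, hchar]
  have hσg : σ g = ξ • g := by
    have hCξ : C ξ ^ 2 = 1 := by rw [← map_pow, hξ2, map_one]
    have hσC (a : k) : σ (C a) = C a := σ.commutes a
    simp only [g, smul_eq_C_mul, map_add, map_mul, hσ, hσC]
    linear_combination -(C 2⁻¹ * σ X * hCξ)
  have hg1' : IsUnit (coeff 1 g) := by simp [hg1]
  set φ := substAlgEquiv g hg0 hg1'
  have hφX : φ X = g := substAlgEquiv_X g hg0 hg1'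
  refine ⟨hξ2, φ, hφX, ?_⟩
  rw [hφX, hσg, ← hφX, ← map_smul, φ.symm_apply_apply, smul_eq_C_mul]
end

section
/- Let k be a field and r an even natural number. Consider the k-algebra homomorphism ι : k[[x,y]]/(y² - x^{r+1}) → k[[t]] defined by x ↦ t² and y ↦ t^{r+1}. Then ι is injective, and its image is exactly the set of power series f ∈ k[[t]] such that the coefficient of t^n in f vanishes for every odd n with n < r + 1. -/
/-!
The substitution `Φ : x ↦ t², y ↦ t^(r+1)` kills `g = y² - x^(r+1)`. Division by `g` writes
every `f` as `g * q + c` with `c` of degree `< 2` in `y`, and for `r` even the monomials `x^a`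
and `x^a y` of such a `c` go to distinct powers `t^(2a)` (even) and `t^(2a+r+1)` (odd, at least
`r + 1`). Hence `Φ` is injective on such `c`, so `ker Φ = (g)`, and the image of `Φ` consists of
the series with no odd coefficient below `r + 1`.
-/

namespace MvPowerSeries

variable {σ R : Type*} [CommRing R]

theorem hasSubst_X_pow [Finite σ] {w : σ → ℕ} (hw : ∀ i, w i ≠ 0) :
    HasSubst (fun i => (PowerSeries.X : PowerSeries R) ^ w i) :=
  hasSubst_of_constantCoeff_zero fun i =>
    show PowerSeries.constantCoeff (PowerSeries.X ^ w i) = 0 by simp [hw i]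

theorem coeff_subst_X_pow [Finite σ] {w : σ → ℕ} (hw : ∀ i, w i ≠ 0)
    (f : MvPowerSeries σ R) (n : ℕ) :
    PowerSeries.coeff n (subst (fun i => (PowerSeries.X : PowerSeries R) ^ w i) f) =
      ∑ᶠ d, if Finsupp.weight w d = n then coeff d f else 0 := by
  rw [← PowerSeries.coeff_coeToMvPowerSeries, coeff_subst (hasSubst_X_pow hw)]
  congr 1
  ext d
  have hprod : (d.prod fun i e => ((PowerSeries.X : PowerSeries R) ^ w i) ^ e) =
      PowerSeries.X ^ Finsupp.weight w d := by
    simp only [← pow_mul, Finsupp.prod, Finset.prod_pow_eq_pow_sum, Finsupp.weight_apply,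
      Finsupp.sum, smul_eq_mul, mul_comm]
  rw [hprod, PowerSeries.coeff_coeToMvPowerSeries, PowerSeries.coeff_X_pow, smul_eq_mul,
    mul_ite, mul_one, mul_zero]
  simp only [eq_comm]

/-- `∑ₖ coeff (d - k • single i s + k • single j m) f` over `k ≤ d i / s`. Its values at
`d + single j m` are the coefficients of the quotient of `f` by `X j ^ m - X i ^ s`, those at `d`
with `d j < m` the coefficients of the remainder. -/
noncomputable def binomialDivCoeff (f : MvPowerSeries σ R) {i j : σ} (hij : i ≠ j) {s : ℕ}
    (hs : 0 < s) (m : ℕ) (d : σ →₀ ℕ) : R :=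
  coeff d f +
    if s ≤ d i then binomialDivCoeff f hij hs m (d - Finsupp.single i s + Finsupp.single j m)
    else 0
termination_by d i
decreasing_by simp [hij.symm]; omega

theorem exists_eq_X_pow_sub_X_pow_mul_add (f : MvPowerSeries σ R) {i j : σ} (hij : i ≠ j)
    {s : ℕ} (hs : 0 < s) (m : ℕ) :
    ∃ q c : MvPowerSeries σ R,
      f = (X j ^ m - X i ^ s) * q + c ∧ ∀ d, m ≤ d j → coeff d c = 0 := by
  let Q := binomialDivCoeff f hij hs m
  let q : MvPowerSeries σ R := fun d => Q (d + Finsupp.single j m)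
  let c : MvPowerSeries σ R := fun d => if d j < m then Q d else 0
  refine ⟨q, c, ?_, fun d hd => if_neg (not_lt.mpr hd)⟩
  ext d
  have hQ : Q d = coeff d f +
      if s ≤ d i then Q (d - Finsupp.single i s + Finsupp.single j m) else 0 :=
    binomialDivCoeff.eq_1 f hij hs m d
  have hq (e : σ →₀ ℕ) : coeff e q = Q (e + Finsupp.single j m) := rfl
  have hc : coeff d c = if d j < m then Q d else 0 := rfl
  rw [map_add, sub_mul, map_sub, X_pow_eq, X_pow_eq, coeff_monomial_mul, coeff_monomial_mul,
    hq, hq, hc]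
  simp only [one_mul, Finsupp.single_le_iff]
  by_cases hm : m ≤ d j
  · rw [if_pos hm, if_neg (not_lt.mpr hm), tsub_add_cancel_of_le (Finsupp.single_le_iff.mpr hm)]
    linear_combination -hQ
  · rw [if_neg hm, if_pos (not_le.mp hm)]
    linear_combination -hQ

end MvPowerSeries

open MvPowerSeries

section CuspParam

variable {R : Type*} [CommRing R]

lemma cuspWeight_ne_zero (r : ℕ) : ∀ i, ![2, r + 1] i ≠ 0 := by
  simp [Fin.forall_fin_two]

noncomputable def cuspParam (r : ℕ) : MvPowerSeries (Fin 2) R →ₐ[R] PowerSeries R :=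
  substAlgHom (hasSubst_X_pow (cuspWeight_ne_zero r))

lemma finTwoArrowEquiv'_symm_apply_eq_single_add_single (p : ℕ × ℕ) :
    (finTwoArrowEquiv' ℕ).symm p = Finsupp.single 0 p.1 + Finsupp.single 1 p.2 := by
  ext i
  fin_cases i <;> simp

theorem coeff_cuspParam (r : ℕ) (f : MvPowerSeries (Fin 2) R) (n : ℕ) :
    PowerSeries.coeff n (cuspParam r f) =
      ∑ p ∈ (Finset.range (n + 1) ×ˢ Finset.range (n + 1)).filter
          (fun p => 2 * p.1 + (r + 1) * p.2 = n),
        coeff (Finsupp.single 0 p.1 + Finsupp.single 1 p.2) f := by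
  have hweight (p : ℕ × ℕ) :
      Finsupp.weight ![2, r + 1] (Finsupp.single 0 p.1 + Finsupp.single 1 p.2) =
        2 * p.1 + (r + 1) * p.2 := by
    simp [Finsupp.weight_apply, Finsupp.sum_fintype, mul_comm]
  rw [Finset.sum_filter, cuspParam, substAlgHom_apply, coeff_subst_X_pow (cuspWeight_ne_zero r),
    ← finsum_comp_equiv (finTwoArrowEquiv' ℕ).symm]
  simp only [finTwoArrowEquiv'_symm_apply_eq_single_add_single, hweight]
  refine finsum_eq_sum_of_support_subset _ (Function.support_subset_iff'.mpr fun p hp => ?_)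
  refine if_neg fun hpn => hp ?_
  have : p.2 ≤ (r + 1) * p.2 := Nat.le_mul_of_pos_left _ r.succ_pos
  simp only [Finset.coe_product, Finset.coe_range, Set.mem_prod, Set.mem_Iio]
  omega

theorem cuspParam_X_sq_sub (r : ℕ) :
    cuspParam r ((X 1 : MvPowerSeries (Fin 2) R) ^ 2 - X 0 ^ (r + 1)) = 0 := by
  simp only [cuspParam, map_sub, map_pow, substAlgHom_X]
  simp [← pow_mul, mul_comm]

theorem coeff_cuspParam_of_odd_of_lt (r : ℕ) (f : MvPowerSeries (Fin 2) R) {n : ℕ}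
    (hn : Odd n) (hnr : n < r + 1) : PowerSeries.coeff n (cuspParam r f) = 0 := by
  rw [coeff_cuspParam]
  refine Finset.sum_eq_zero fun p hp => ?_
  rw [Finset.mem_filter] at hp
  obtain ⟨k, rfl⟩ := hn
  rcases p with ⟨a, _ | b⟩
  · omega
  · nlinarith [hp.2]

lemma eq_of_two_mul_add_eq {r : ℕ} (hr : Even r) {p q : ℕ × ℕ} (hp : p.2 < 2) (hq : q.2 < 2)
    (h : 2 * p.1 + (r + 1) * p.2 = 2 * q.1 + (r + 1) * q.2) : p = q := by
  obtain ⟨t, rfl⟩ := hr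
  obtain ⟨a, b⟩ := p
  obtain ⟨a', b'⟩ := q
  simp only at hp hq h
  interval_cases b <;> interval_cases b' <;>
    simp only [Prod.mk.injEq, mul_zero, mul_one, and_true] at h ⊢ <;> omega

theorem coeff_cuspParam_two_mul_add {r : ℕ} (hr : Even r) {c : MvPowerSeries (Fin 2) R}
    (hc : ∀ d : Fin 2 →₀ ℕ, 2 ≤ d 1 → coeff d c = 0) {p : ℕ × ℕ} (hp : p.2 < 2) :
    PowerSeries.coeff (2 * p.1 + (r + 1) * p.2) (cuspParam r c) =
      coeff (Finsupp.single 0 p.1 + Finsupp.single 1 p.2) c := by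
  rw [coeff_cuspParam]
  refine Finset.sum_eq_single_of_mem p ?_ fun q hq hqp => hc _ ?_
  · have : p.2 ≤ (r + 1) * p.2 := Nat.le_mul_of_pos_left _ r.succ_pos
    simp only [Finset.mem_filter, Finset.mem_product, Finset.mem_range, and_true]
    omega
  · rw [Finset.mem_filter] at hq
    simp only [Finsupp.add_apply, Finsupp.single_eq_same, Finsupp.single_apply, zero_ne_one,
      if_false, zero_add]
    by_contra! hq2
    exact hqp (eq_of_two_mul_add_eq hr hq2 hp hq.2)

theorem eq_zero_of_cuspParam_eq_zero {r : ℕ} (hr : Even r) {c : MvPowerSeries (Fin 2) R}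
    (hc : ∀ d : Fin 2 →₀ ℕ, 2 ≤ d 1 → coeff d c = 0) (h : cuspParam r c = 0) :
    c = 0 := by
  ext d
  by_cases hd : 2 ≤ d 1
  · exact hc d hd
  · have hd' : d = Finsupp.single 0 (d 0) + Finsupp.single 1 (d 1) := by
      ext i
      fin_cases i <;> simp
    rw [hd', ← coeff_cuspParam_two_mul_add hr hc (p := (d 0, d 1)) (not_le.mp hd), h, map_zero,
      map_zero]

theorem ker_cuspParam {r : ℕ} (hr : Even r) :
    RingHom.ker (cuspParam (R := R) r) = Ideal.span {X 1 ^ 2 - X 0 ^ (r + 1)} := by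
  refine le_antisymm (fun f hf => ?_)
    (Ideal.span_le.mpr (Set.singleton_subset_iff.mpr (cuspParam_X_sq_sub r)))
  obtain ⟨q, c, rfl, hc⟩ := exists_eq_X_pow_sub_X_pow_mul_add f (i := 0) (j := 1)
    zero_ne_one r.succ_pos 2
  rw [RingHom.mem_ker, map_add, map_mul, cuspParam_X_sq_sub, zero_mul, zero_add] at hf
  rw [eq_zero_of_cuspParam_eq_zero hr hc hf, add_zero]
  exact Ideal.mul_mem_right _ _ (Ideal.subset_span rfl)

theorem range_cuspParam {r : ℕ} (hr : Even r) :
    Set.range (cuspParam (R := R) r) =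
      {h | ∀ n : ℕ, Odd n → n < r + 1 → PowerSeries.coeff n h = 0} := by
  ext h
  refine ⟨fun ⟨f, hf⟩ n hn hnr => hf ▸ coeff_cuspParam_of_odd_of_lt r f hn hnr,
    fun hh => ?_⟩
  let c : MvPowerSeries (Fin 2) R := fun d =>
    if d 1 < 2 then PowerSeries.coeff (2 * d 0 + (r + 1) * d 1) h else 0
  have hcoeff (d : Fin 2 →₀ ℕ) :
      coeff d c = if d 1 < 2 then PowerSeries.coeff (2 * d 0 + (r + 1) * d 1) h else 0 := rfl
  have hc (d : Fin 2 →₀ ℕ) (hd : 2 ≤ d 1) : coeff d c = 0 := by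
    rw [hcoeff, if_neg (not_lt.mpr hd)]
  refine ⟨c, PowerSeries.ext fun n => ?_⟩
  by_cases hn : Odd n ∧ n < r + 1
  · rw [coeff_cuspParam_of_odd_of_lt r c hn.1 hn.2, hh n hn.1 hn.2]
  obtain ⟨p, hp, rfl⟩ : ∃ p : ℕ × ℕ, p.2 < 2 ∧ 2 * p.1 + (r + 1) * p.2 = n := by
    rcases Nat.even_or_odd n with ⟨m, rfl⟩ | hodd
    · exact ⟨(m, 0), two_pos, by ring⟩
    · have hrn : r + 1 ≤ n := not_lt.mp fun hnr => hn ⟨hodd, hnr⟩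
      refine ⟨((n - (r + 1)) / 2, 1), one_lt_two, ?_⟩
      obtain ⟨k, rfl⟩ := hodd
      obtain ⟨t, rfl⟩ := hr
      simp only [mul_one]
      omega
  rw [coeff_cuspParam_two_mul_add hr hc hp]
  rw [hcoeff]
  simp [hp]

end CuspParam

theorem stmt_6 {k : Type*} [Field k] (r : ℕ) (hr : Even r)
    (I : Ideal (MvPowerSeries (Fin 2) k))
    (hI : I = Ideal.span {(MvPowerSeries.X 1 : MvPowerSeries (Fin 2) k) ^ 2 -
      (MvPowerSeries.X 0 : MvPowerSeries (Fin 2) k) ^ (r + 1)}) :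
    ∃ ι : (MvPowerSeries (Fin 2) k ⧸ I) →ₐ[k] PowerSeries k,
      (∀ (f : MvPowerSeries (Fin 2) k) (n : ℕ),
        PowerSeries.coeff n (ι (Ideal.Quotient.mk I f)) =
          ∑ p ∈ (Finset.range (n + 1) ×ˢ Finset.range (n + 1)).filter
              (fun p => 2 * p.1 + (r + 1) * p.2 = n),
            MvPowerSeries.coeff
              (Finsupp.single (0 : Fin 2) p.1 + Finsupp.single 1 p.2) f) ∧
      Function.Injective ι ∧
      Set.range ι = {f : PowerSeries k |
        ∀ n : ℕ, Odd n → n < r + 1 → PowerSeries.coeff n f = 0} := by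
  obtain rfl : I = RingHom.ker (cuspParam (R := k) r) := hI.trans (ker_cuspParam hr).symm
  refine ⟨Ideal.kerLiftAlg (cuspParam (R := k) r), fun f n => ?_,
    Ideal.kerLiftAlg_injective _, ?_⟩
  · rw [Ideal.kerLiftAlg_mk, coeff_cuspParam]
  · rw [← range_cuspParam hr, ← Ideal.Quotient.mk_surjective.range_comp]
    rfl
end

section
/- Let k be a field of characteristic ≠ 2, and let r = 2m - 1 be an odd natural number with m ≥ 1. Consider the k-algebra homomorphism ι : k[[x,y]]/(y² - x^{r+1}) → k[[t]] ⊕ k[[t]] defined by x ↦ (t, t) and y ↦ (t^m, -t^m). Then ι is injective, and its image is exactly the set of pairs (f, g) ∈ k[[t]] ⊕ k[[t]] such that f ≡ g modulo t^m. -/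
/-!
For `ε : k`, substituting `x ↦ t, y ↦ ε t^m` factors as the shear `y ↦ y + ε x^m`, an
automorphism of `k⟦x, y⟧` with inverse `y ↦ y - ε x^m`, followed by `y ↦ 0`, whose kernel is
`(y)`. Hence the kernel of the `ε`-branch is `(y - ε x^m)`. If `f` is killed by both branches
`ε = 1, -1`, then `f = (y - x^m) q`, and `q` is killed by the `(-1)`-branch because `y - x^m`
maps to `-2 t^m ≠ 0` there; so `f ∈ (y² - x^{2m})`, which is injectivity.

Every `f` is `a(x) + y q`, so every branch of `f` is `a(t)` modulo `t^m`. Conversely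
`a(x) + y b(x)` maps to `(a + t^m b, a - t^m b)`, which reaches every pair congruent modulo `t^m`
as soon as `2` is invertible.
-/

open MvPowerSeries

namespace OddASingularity

noncomputable section

section CommRing

variable {R : Type*} [CommRing R] {m : ℕ}

def branch (ε : R) (m : ℕ) : Fin 2 → PowerSeries R :=
  ![PowerSeries.X, PowerSeries.C ε * PowerSeries.X ^ m]

def shear (c : R) (m : ℕ) : Fin 2 → MvPowerSeries (Fin 2) R :=
  ![X 0, X 1 + C c * X 0 ^ m]

@[simp] theorem branch_zero (ε : R) (m : ℕ) : branch ε m 0 = PowerSeries.X := rfl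

@[simp] theorem branch_one (ε : R) (m : ℕ) :
    branch ε m 1 = PowerSeries.C ε * PowerSeries.X ^ m := rfl

@[simp] theorem shear_zero (c : R) (m : ℕ) : shear c m 0 = X 0 := rfl

@[simp] theorem shear_one (c : R) (m : ℕ) : shear c m 1 = X 1 + C c * X 0 ^ m := rfl

theorem hasSubst_branch (ε : R) (hm : m ≠ 0) : HasSubst (branch ε m) :=
  hasSubst_of_constantCoeff_zero fun s => by
    change PowerSeries.constantCoeff _ = 0
    fin_cases s <;> simp [hm]

theorem hasSubst_shear (c : R) (hm : m ≠ 0) : HasSubst (shear c m) :=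
  hasSubst_of_constantCoeff_zero fun s => by fin_cases s <;> simp [hm]

theorem eq_single_zero_add_single_one (d : Fin 2 →₀ ℕ) :
    d = Finsupp.single 0 (d 0) + Finsupp.single 1 (d 1) := by
  ext i
  fin_cases i <;> simp

theorem prod_pow_branch (ε : R) (m : ℕ) (d : Fin 2 →₀ ℕ) :
    d.prod (fun s e => branch ε m s ^ e) = PowerSeries.monomial (d 0 + m * d 1) (ε ^ d 1) := by
  rw [Finsupp.prod_fintype _ _ fun _ => pow_zero _, Fin.prod_univ_two, branch_zero, branch_one,
    mul_pow, ← map_pow, ← pow_mul, PowerSeries.monomial_eq_C_mul_X_pow, pow_add]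
  ring

theorem coeff_subst_branch (ε : R) (hm : m ≠ 0) (f : MvPowerSeries (Fin 2) R) (n : ℕ) :
    PowerSeries.coeff n (subst (branch ε m) f) =
      ∑ p ∈ (Finset.range (n + 1) ×ˢ Finset.range (n + 1)).filter (fun p => p.1 + m * p.2 = n),
        ε ^ p.2 * coeff (Finsupp.single 0 p.1 + Finsupp.single 1 p.2) f := by
  set S := (Finset.range (n + 1) ×ˢ Finset.range (n + 1)).filter (fun p => p.1 + m * p.2 = n)
  set e : ℕ × ℕ → (Fin 2 →₀ ℕ) := fun p => Finsupp.single 0 p.1 + Finsupp.single 1 p.2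
  have he : Function.Injective e := fun p q h => by
    have h0 := congrArg (· 0) h
    have h1 := congrArg (· 1) h
    simp only [e, Finsupp.add_apply, Finsupp.single_apply] at h0 h1
    exact Prod.ext (by simpa using h0) (by simpa using h1)
  rw [PowerSeries.coeff, coeff_subst (hasSubst_branch ε hm)]
  simp_rw [prod_pow_branch]
  rw [finsum_eq_sum_of_support_subset (s := S.image e), Finset.sum_image he.injOn]
  · refine Finset.sum_congr rfl fun p hp => ?_
    simp [e, ← PowerSeries.coeff_def rfl, (Finset.mem_filter.mp hp).2, mul_comm]
  · intro d hd
    have hn : d 0 + m * d 1 = n := by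
      by_contra h
      simp [← PowerSeries.coeff_def rfl, PowerSeries.coeff_monomial, Ne.symm h] at hd
    have h1 : d 1 ≤ m * d 1 := Nat.le_mul_of_pos_left _ (Nat.pos_of_ne_zero hm)
    refine Finset.mem_image.mpr ⟨(d 0, d 1), ?_, (eq_single_zero_add_single_one d).symm⟩
    simp only [S, Finset.mem_filter, Finset.mem_product, Finset.mem_range]
    omega

theorem coeff_subst_branch_zero (hm : m ≠ 0) (f : MvPowerSeries (Fin 2) R) (n : ℕ) :
    PowerSeries.coeff n (subst (branch (0 : R) m) f) = coeff (Finsupp.single 0 n) f := by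
  rw [coeff_subst_branch 0 hm, Finset.sum_eq_single (n, 0)]
  · simp
  · rintro p hp hne
    have hp2 : p.2 ≠ 0 := fun h =>
      hne <| Prod.ext (by simpa [h] using (Finset.mem_filter.mp hp).2) h
    rw [zero_pow hp2, zero_mul]
  · intro h
    exact absurd (by simp) h

theorem subst_branch_subst_X_zero (ε : R) (hm : m ≠ 0) (a : PowerSeries R) :
    subst (branch ε m) (PowerSeries.subst (X 0 : MvPowerSeries (Fin 2) R) a) = a := by
  rw [PowerSeries.subst_def, subst_comp_subst_apply
    (PowerSeries.HasSubst.X (S := R) (0 : Fin 2)).const (hasSubst_branch ε hm),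
    subst_X (hasSubst_branch ε hm)]
  exact PowerSeries.X_subst a

theorem subst_branch_subst_X_zero_add_X_one_mul (ε : R) (hm : m ≠ 0) (a b : PowerSeries R) :
    subst (branch ε m)
        (PowerSeries.subst (X 0) a + X 1 * PowerSeries.subst (X 0) b : MvPowerSeries (Fin 2) R) =
      a + PowerSeries.C ε * PowerSeries.X ^ m * b := by
  have hb := hasSubst_branch ε hm
  rw [subst_add hb, subst_mul hb, subst_branch_subst_X_zero ε hm, subst_branch_subst_X_zero ε hm,
    subst_X hb, branch_one]

theorem X_one_dvd_sub_subst_X_zero (hm : m ≠ 0) (f : MvPowerSeries (Fin 2) R) :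
    X 1 ∣ f - PowerSeries.subst (X 0) (subst (branch (0 : R) m) f) := by
  refine X_dvd_iff.mpr fun d hd => ?_
  have hd' : d = Finsupp.single 0 (d 0) := by
    simpa [hd] using eq_single_zero_add_single_one d
  rw [map_sub, PowerSeries.coeff_subst_single, if_pos hd', coeff_subst_branch_zero hm, ← hd',
    sub_self]

theorem subst_branch_zero_subst_shear (ε : R) (hm : m ≠ 0) (f : MvPowerSeries (Fin 2) R) :
    subst (branch (0 : R) m) (subst (shear ε m) f) = subst (branch ε m) f := by
  have hb := hasSubst_branch (0 : R) hm
  rw [subst_comp_subst_apply (hasSubst_shear ε hm) hb]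
  congr 1
  funext s
  fin_cases s <;> simp [subst_add hb, subst_mul hb, subst_pow hb, subst_X hb]
  rfl

theorem subst_shear_neg_subst_shear (ε : R) (hm : m ≠ 0) (f : MvPowerSeries (Fin 2) R) :
    subst (shear (-ε) m) (subst (shear ε m) f) = f := by
  have ha := hasSubst_shear (-ε) hm
  rw [subst_comp_subst_apply (hasSubst_shear ε hm) ha]
  refine (congrArg (subst · f) ?_).trans (congr_fun subst_self f)
  funext s
  fin_cases s <;> simp [subst_add ha, subst_mul ha, subst_pow ha, subst_X ha]

theorem subst_branch_X_one_sub (ε δ : R) (hm : m ≠ 0) :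
    subst (branch δ m) (X 1 - C ε * X 0 ^ m : MvPowerSeries (Fin 2) R) =
      PowerSeries.C (δ - ε) * PowerSeries.X ^ m := by
  have hb := hasSubst_branch δ hm
  simp only [subst_sub hb, subst_mul hb, subst_pow hb, subst_X hb, subst_C, branch_zero,
    branch_one, map_sub, sub_mul]
  rfl

theorem subst_branch_eq_zero_iff {ε : R} (hm : m ≠ 0) {f : MvPowerSeries (Fin 2) R} :
    subst (branch ε m) f = 0 ↔ X 1 - C ε * X 0 ^ m ∣ f := by
  have hb := hasSubst_branch ε hm
  constructor
  · intro hf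
    have hsheared : subst (branch (0 : R) m) (subst (shear ε m) f) = 0 := by
      rw [subst_branch_zero_subst_shear ε hm, hf]
    obtain ⟨q, hq⟩ := X_one_dvd_sub_subst_X_zero hm (subst (shear ε m) f)
    rw [hsheared, ← PowerSeries.coe_substAlgHom (PowerSeries.HasSubst.X 0), map_zero,
      sub_zero] at hq
    have ha := hasSubst_shear (-ε) hm
    refine ⟨subst (shear (-ε) m) q, ?_⟩
    rw [← subst_shear_neg_subst_shear ε hm f, hq, subst_mul ha, subst_X ha]
    simp [sub_eq_add_neg]
  · rintro ⟨q, rfl⟩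
    rw [subst_mul hb, subst_branch_X_one_sub ε ε hm, sub_self, map_zero, zero_mul, zero_mul]

theorem X_pow_dvd_subst_branch_sub_subst_branch (ε δ : R) (hm : m ≠ 0)
    (f : MvPowerSeries (Fin 2) R) :
    PowerSeries.X ^ m ∣ subst (branch ε m) f - subst (branch δ m) f := by
  have hX : ∀ η : R,
      PowerSeries.X ^ m ∣ subst (branch η m) f - subst (branch (0 : R) m) f := by
    intro η
    obtain ⟨q, hq⟩ := X_one_dvd_sub_subst_X_zero hm f
    have hb := hasSubst_branch η hm
    have hq' := congrArg (subst (branch η m)) hq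
    rw [subst_sub hb, subst_branch_subst_X_zero η hm, subst_mul hb, subst_X hb,
      branch_one] at hq'
    exact ⟨PowerSeries.C η * subst (branch η m) q, by rw [hq']; ring⟩
  simpa using dvd_sub (hX ε) (hX δ)

theorem exists_subst_branch_eq {ε δ : R} (hεδ : IsUnit (ε - δ)) (hm : m ≠ 0)
    {F G : PowerSeries R} (hFG : PowerSeries.X ^ m ∣ F - G) :
    ∃ f : MvPowerSeries (Fin 2) R, subst (branch ε m) f = F ∧ subst (branch δ m) f = G := by
  obtain ⟨h, hh⟩ := hFG
  set b := PowerSeries.C (↑hεδ.unit⁻¹ : R) * h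
  have hb : (PowerSeries.C ε - PowerSeries.C δ) * b = h := by
    rw [← map_sub, ← mul_assoc, ← map_mul, IsUnit.mul_val_inv, map_one, one_mul]
  refine ⟨PowerSeries.subst (X 0) (G - PowerSeries.C δ * PowerSeries.X ^ m * b) +
    X 1 * PowerSeries.subst (X 0) b, ?_, ?_⟩
  · rw [subst_branch_subst_X_zero_add_X_one_mul ε hm]
    linear_combination -hh + PowerSeries.X ^ m * hb
  · rw [subst_branch_subst_X_zero_add_X_one_mul δ hm]
    ring

def branchPair (ε δ : R) (hm : m ≠ 0) :
    MvPowerSeries (Fin 2) R →ₐ[R] PowerSeries R × PowerSeries R :=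
  (substAlgHom (hasSubst_branch ε hm)).prod (substAlgHom (hasSubst_branch δ hm))

@[simp] theorem branchPair_apply (ε δ : R) (hm : m ≠ 0) (f : MvPowerSeries (Fin 2) R) :
    branchPair ε δ hm f = (subst (branch ε m) f, subst (branch δ m) f) := by
  simp [branchPair]

theorem range_branchPair {ε δ : R} (hεδ : IsUnit (ε - δ)) (hm : m ≠ 0) :
    Set.range (branchPair ε δ hm) = {fg | PowerSeries.X ^ m ∣ fg.1 - fg.2} := by
  ext fg
  constructor
  · rintro ⟨f, rfl⟩
    simpa using X_pow_dvd_subst_branch_sub_subst_branch ε δ hm f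
  · intro hfg
    obtain ⟨f, hF, hG⟩ := exists_subst_branch_eq hεδ hm hfg
    exact ⟨f, by rw [branchPair_apply, hF, hG]⟩

end CommRing

theorem branchPair_eq_zero_iff {R : Type*} [CommRing R] [IsDomain R] {ε δ : R} (hεδ : ε ≠ δ)
    {m : ℕ} (hm : m ≠ 0) {f : MvPowerSeries (Fin 2) R} :
    branchPair ε δ hm f = 0 ↔ (X 1 - C ε * X 0 ^ m) * (X 1 - C δ * X 0 ^ m) ∣ f := by
  rw [branchPair_apply, Prod.mk_eq_zero, subst_branch_eq_zero_iff hm,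
    subst_branch_eq_zero_iff hm]
  constructor
  · rintro ⟨⟨q, rfl⟩, hδ⟩
    refine mul_dvd_mul_left _ ((subst_branch_eq_zero_iff hm).mp ?_)
    have hne : PowerSeries.C (δ - ε) * PowerSeries.X ^ m ≠ 0 :=
      mul_ne_zero ((map_ne_zero_iff _ PowerSeries.C_injective).mpr (sub_ne_zero.mpr hεδ.symm))
        (pow_ne_zero _ PowerSeries.X_ne_zero)
    rw [← subst_branch_eq_zero_iff hm, subst_mul (hasSubst_branch δ hm),
      subst_branch_X_one_sub ε δ hm] at hδ
    exact (mul_eq_zero.mp hδ).resolve_left hne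
  · intro h
    exact ⟨dvd_trans (dvd_mul_right _ _) h, dvd_trans (dvd_mul_left _ _) h⟩

end

end OddASingularity

open OddASingularity in
theorem stmt_7 {k : Type*} [Field k] (h2 : (2 : k) ≠ 0) (m : ℕ) (hm : 1 ≤ m)
    (r : ℕ) (hr : r = 2 * m - 1)
    (I : Ideal (MvPowerSeries (Fin 2) k))
    (hI : I = Ideal.span {(MvPowerSeries.X 1 : MvPowerSeries (Fin 2) k) ^ 2 -
      (MvPowerSeries.X 0 : MvPowerSeries (Fin 2) k) ^ (r + 1)}) :
    ∃ ι : (MvPowerSeries (Fin 2) k ⧸ I) →ₐ[k] (PowerSeries k × PowerSeries k),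
      (∀ (f : MvPowerSeries (Fin 2) k) (n : ℕ),
        (PowerSeries.coeff n (ι (Ideal.Quotient.mk I f)).1 =
          ∑ p ∈ (Finset.range (n + 1) ×ˢ Finset.range (n + 1)).filter
              (fun p => p.1 + m * p.2 = n),
            MvPowerSeries.coeff
              (Finsupp.single (0 : Fin 2) p.1 + Finsupp.single 1 p.2) f) ∧
        (PowerSeries.coeff n (ι (Ideal.Quotient.mk I f)).2 =
          ∑ p ∈ (Finset.range (n + 1) ×ˢ Finset.range (n + 1)).filter
              (fun p => p.1 + m * p.2 = n),
            (-1 : k) ^ p.2 *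
              MvPowerSeries.coeff
                (Finsupp.single (0 : Fin 2) p.1 + Finsupp.single 1 p.2) f)) ∧
      Function.Injective ι ∧
      Set.range ι = {fg : PowerSeries k × PowerSeries k |
        fg.1 - fg.2 ∈ Ideal.span {(PowerSeries.X : PowerSeries k) ^ m}} := by
  have hm0 : m ≠ 0 := by omega
  have hne : (1 : k) ≠ -1 := fun h => h2 (by linear_combination h)
  have hI' : I = Ideal.span {(X 1 - C 1 * X 0 ^ m) * (X 1 - C (-1) * X 0 ^ m)} := by
    rw [hI, show r + 1 = 2 * m by omega, map_neg, map_one, pow_mul]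
    ring_nf
  have hker : ∀ f, f ∈ I ↔ branchPair (1 : k) (-1) hm0 f = 0 := fun f => by
    rw [branchPair_eq_zero_iff hne, hI', Ideal.mem_span_singleton]
  set ι := Ideal.Quotient.liftₐ I (branchPair (1 : k) (-1) hm0) fun f => (hker f).mp
  have hι : ∀ f, ι (Ideal.Quotient.mk I f) = branchPair 1 (-1) hm0 f := fun _ => rfl
  refine ⟨ι, fun f n => ?_, ?_, ?_⟩
  · simp only [hι, branchPair_apply, coeff_subst_branch _ hm0, one_pow, one_mul, and_self]
  · refine (injective_iff_map_eq_zero ι).mpr fun x hx => ?_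
    obtain ⟨f, rfl⟩ := Ideal.Quotient.mk_surjective x
    rw [Ideal.Quotient.eq_zero_iff_mem, hker, ← hι, hx]
  · rw [← Ideal.Quotient.mk_surjective.range_comp, show ι ∘ Ideal.Quotient.mk I = _ from
      funext hι, range_branchPair (sub_ne_zero.mpr hne).isUnit hm0]
    simp only [Ideal.mem_span_singleton]
end

section
/- Let k be a field of characteristic ≠ 2 and k ≥ 1 a natural number; set r = 2k - 1. Let σ be the involution of A_r := k[[x,y]]/(y² - x^{2k}) defined by x ↦ -x, y ↦ y. Then the k-algebra map i : k[[u,v]]/(v² - u^k) → k[[x,y]]/(y² - x^{2k}) given by u ↦ x², v ↦ y is well-defined, injective, and its image equals the subring of σ-invariant elements of A_r. -/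
/-!
Substituting `x², y` for `u, v` is the substitution of monomials whose exponent map
`(a, b) ↦ (2a, b)` is injective, so it is injective on power series and its image consists of
the series supported on exponents with `x`-degree even; as `2 ≠ 0`, these are exactly the fixed
points of `x ↦ -x`. It sends `v² - u^k` to `y² - x^{2k}`, and if the image of `f` is `c` times
this invariant nonzero series, applying the involution and cancelling shows that `c` is
invariant, hence an image itself, so `f` is a multiple of `v² - u^k`: the ideal of `A_r` pulls
back to that of the source. An invariant class of `A_r` lifts to an invariant series by
averaging a lift with its reflection.
-/

namespace MvPowerSeries

open Finsupp Function

variable {σ τ R : Type*} [CommRing R] {m : σ → τ →₀ ℕ}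

theorem prod_monomial_one_pow (d : σ →₀ ℕ) :
    (d.prod fun s n ↦ monomial (m s) (1 : R) ^ n) = monomial (linearCombination ℕ m d) 1 := by
  simp only [monomial_pow, one_pow]
  rw [Finsupp.prod, prod_monomial, Finset.prod_const_one, linearCombination_apply, Finsupp.sum]

theorem X_pow_sub_X_pow_ne_zero [Nontrivial R] {i j : σ} (hij : i ≠ j) {a : ℕ} (ha : a ≠ 0)
    (b : ℕ) : (X i ^ a - X j ^ b : MvPowerSeries σ R) ≠ 0 := by
  intro h
  have := congr_arg (coeff (single i a)) h
  rw [map_sub, X_pow_eq, X_pow_eq, coeff_monomial_same, coeff_monomial_ne, sub_zero,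
    map_zero] at this
  · exact one_ne_zero this
  · rw [Ne, single_eq_single_iff]
    tauto

theorem hasSubst_monomial_one (hm : Injective (linearCombination ℕ m)) :
    HasSubst fun s ↦ monomial (m s) (1 : R) := by
  have hm_single (s : σ) : linearCombination ℕ m (single s 1) = m s := by simp
  have hm' : Injective m := fun s t h ↦ by
    rw [← hm_single, ← hm_single, hm.eq_iff, single_left_inj one_ne_zero] at h
    exact h
  have hm_mem {d : τ →₀ ℕ} {s : σ} (hs : coeff d (monomial (m s) (1 : R)) ≠ 0) : m s = d :=
    of_not_not fun h ↦ hs (coeff_monomial_ne (Ne.symm h) _)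
  refine ⟨fun s ↦ ?_, fun d ↦ Set.Subsingleton.finite fun s hs t ht ↦ hm' ?_⟩
  · have hs : m s ≠ 0 := by
      rw [← hm_single, ← map_zero (linearCombination ℕ m), hm.ne_iff]
      exact single_ne_zero.mpr one_ne_zero
    rw [← coeff_zero_eq_constantCoeff_apply, coeff_monomial_ne hs.symm]
    exact IsNilpotent.zero
  · exact (hm_mem hs).trans (hm_mem ht).symm

theorem coeff_linearCombination_subst_monomial_one (hm : Injective (linearCombination ℕ m))
    (f : MvPowerSeries σ R) (d : σ →₀ ℕ) :
    coeff (linearCombination ℕ m d) (subst (fun s ↦ monomial (m s) (1 : R)) f) = coeff d f := by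
  rw [coeff_subst (hasSubst_monomial_one hm), finsum_eq_single _ d fun d' hd' ↦ by
    rw [prod_monomial_one_pow, coeff_monomial_ne (hm.ne hd').symm, smul_zero]]
  rw [prod_monomial_one_pow, coeff_monomial_same, smul_eq_mul, mul_one]

theorem coeff_subst_monomial_one_of_notMem_range (hm : Injective (linearCombination ℕ m))
    (f : MvPowerSeries σ R) {e : τ →₀ ℕ}
    (he : e ∉ Set.range (linearCombination ℕ m)) :
    coeff e (subst (fun s ↦ monomial (m s) (1 : R)) f) = 0 := by
  rw [coeff_subst (hasSubst_monomial_one hm)]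
  refine finsum_eq_zero_of_forall_eq_zero fun d ↦ ?_
  rw [prod_monomial_one_pow, coeff_monomial_ne (fun h ↦ he ⟨d, h.symm⟩), smul_zero]

theorem subst_monomial_one_injective (hm : Injective (linearCombination ℕ m)) :
    Injective (subst (R := R) fun s ↦ monomial (m s) (1 : R)) := fun f g h ↦ by
  ext d
  rw [← coeff_linearCombination_subst_monomial_one hm, h,
    coeff_linearCombination_subst_monomial_one hm]

theorem range_subst_monomial_one (hm : Injective (linearCombination ℕ m)) :
    Set.range (subst (R := R) fun s ↦ monomial (m s) (1 : R)) =
      {g | ∀ e ∉ Set.range (linearCombination ℕ m), coeff e g = 0} := by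
  ext g
  refine ⟨?_, fun hg ↦ ⟨show MvPowerSeries σ R from fun d ↦ coeff (linearCombination ℕ m d) g, ?_⟩⟩
  · rintro ⟨f, rfl⟩ e he
    exact coeff_subst_monomial_one_of_notMem_range hm f he
  · ext e
    by_cases he : e ∈ Set.range (linearCombination ℕ m)
    · obtain ⟨d, rfl⟩ := he
      exact coeff_linearCombination_subst_monomial_one hm _ d
    · rw [coeff_subst_monomial_one_of_notMem_range hm _ he, hg e he]

end MvPowerSeries

open MvPowerSeries Finsupp Function

theorem Ideal.comap_span_singleton_eq_of_range_eq_fixedPoints {A B F : Type*} [CommRing A]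
    [CommRing B] [NoZeroDivisors B] [FunLike F A B] [RingHomClass F A B] {S : F}
    (hS : Injective S) {T : B →+* B} (hST : Set.range S = fixedPoints T) {q : A}
    (hq : S q ≠ 0) : Ideal.comap S (Ideal.span {S q}) = Ideal.span {q} := by
  refine le_antisymm (fun f hf ↦ ?_) (Ideal.span_le.mpr ?_)
  · have hfix (a : A) : T (S a) = S a := (hST ▸ Set.mem_range_self a : S a ∈ fixedPoints T)
    obtain ⟨c, hc⟩ := Ideal.mem_span_singleton'.mp (Ideal.mem_comap.mp hf)
    have hTc : T c = c := mul_right_cancel₀ hq <| by rw [hc, ← hfix f, ← hc, map_mul, hfix q]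
    obtain ⟨c', rfl⟩ : c ∈ Set.range S := hST ▸ hTc
    rw [← map_mul] at hc
    exact Ideal.mem_span_singleton'.mpr ⟨c', hS hc⟩
  · exact Set.singleton_subset_iff.mpr (Ideal.mem_span_singleton_self _)

theorem range_comp_eq_fixedPoints {k A B Q : Type*} [Field k] [AddCommGroup B] [Module k B]
    [AddCommGroup Q] [Module k Q] (h2 : (2 : k) ≠ 0) {S : A → B} {T : B →ₗ[k] B}
    (hT : Involutive T) (hST : Set.range S = fixedPoints T) {π : B →ₗ[k] Q}
    (hπ : Surjective π) {σ : Q → Q} (hσ : ∀ b, σ (π b) = π (T b)) :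
    Set.range (π ∘ S) = fixedPoints σ := by
  have hfix (a : A) : T (S a) = S a := (hST ▸ Set.mem_range_self a : S a ∈ fixedPoints T)
  ext x
  refine ⟨?_, fun hx ↦ ?_⟩
  · rintro ⟨a, rfl⟩
    exact (hσ (S a)).trans (congr_arg π (hfix a))
  · obtain ⟨b, rfl⟩ := hπ x
    set w := (2⁻¹ : k) • (b + T b)
    have hw : w ∈ fixedPoints T := by
      simp only [w, mem_fixedPoints, IsFixedPt, map_smul, map_add, hT b, add_comm]
    obtain ⟨a, ha⟩ : w ∈ Set.range S := hST ▸ hw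
    refine ⟨a, ?_⟩
    rw [comp_apply, ha, map_smul, map_add, ← hσ, hx, ← two_smul k, smul_smul,
      inv_mul_cancel₀ h2, one_smul]

noncomputable def exponentsXSqY : Fin 2 → Fin 2 →₀ ℕ := ![single 0 2, single 1 1]

theorem linearCombination_exponentsXSqY (d : Fin 2 →₀ ℕ) :
    linearCombination ℕ exponentsXSqY d = single 0 (2 * d 0) + single 1 (d 1) := by
  rw [linearCombination_apply, sum_fintype _ _ (by simp), Fin.sum_univ_two]
  simp [exponentsXSqY, mul_comm]

theorem injective_linearCombination_exponentsXSqY :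
    Injective (linearCombination ℕ exponentsXSqY) := fun d d' h ↦ by
  have h0 := DFunLike.congr_fun h 0
  have h1 := DFunLike.congr_fun h 1
  simp only [linearCombination_exponentsXSqY, coe_add, Pi.add_apply, single_apply] at h0 h1
  ext i
  fin_cases i <;> simp at h0 h1 ⊢ <;> omega

theorem linearCombination_exponentsXSqY_half {e : Fin 2 →₀ ℕ} (he : Even (e 0)) :
    linearCombination ℕ exponentsXSqY (single 0 (e 0 / 2) + single 1 (e 1)) = e := by
  rw [linearCombination_exponentsXSqY]
  ext i
  fin_cases i <;> simp [Nat.mul_div_cancel' (even_iff_two_dvd.mp he)]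

theorem range_linearCombination_exponentsXSqY :
    Set.range (linearCombination ℕ exponentsXSqY) = {e | Even (e 0)} := by
  ext e
  refine ⟨?_, fun he ↦ ⟨_, linearCombination_exponentsXSqY_half he⟩⟩
  rintro ⟨d, rfl⟩
  simp [linearCombination_exponentsXSqY]

section

variable (R : Type*) [CommRing R]

-- Variable `0` plays the role of `u` resp. `x`, variable `1` that of `v` resp. `y`.
noncomputable def substXSqY : MvPowerSeries (Fin 2) R →ₐ[R] MvPowerSeries (Fin 2) R :=
  substAlgHom (hasSubst_monomial_one injective_linearCombination_exponentsXSqY)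

noncomputable def reflectX : MvPowerSeries (Fin 2) R →ₐ[R] MvPowerSeries (Fin 2) R :=
  rescaleAlgHom ![-1, 1]

variable {R}

theorem coeff_substXSqY (f : MvPowerSeries (Fin 2) R) (e : Fin 2 →₀ ℕ) :
    coeff e (substXSqY R f) =
      if e 0 % 2 = 0 then coeff (single 0 (e 0 / 2) + single 1 (e 1)) f else 0 := by
  rw [substXSqY, coe_substAlgHom]
  by_cases he : Even (e 0)
  · rw [if_pos (Nat.even_iff.mp he)]
    conv_lhs => rw [← linearCombination_exponentsXSqY_half he]
    exact coeff_linearCombination_subst_monomial_one injective_linearCombination_exponentsXSqY _ _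
  · rw [if_neg (mt Nat.even_iff.mpr he)]
    refine coeff_subst_monomial_one_of_notMem_range
      injective_linearCombination_exponentsXSqY _ ?_
    rwa [range_linearCombination_exponentsXSqY]

theorem substXSqY_injective : Injective (substXSqY R) := by
  rw [substXSqY, coe_substAlgHom]
  exact subst_monomial_one_injective injective_linearCombination_exponentsXSqY

theorem substXSqY_X_sq_sub_X_pow (n : ℕ) :
    substXSqY R (X 1 ^ 2 - X 0 ^ n) = X 1 ^ 2 - X 0 ^ (2 * n) := by
  rw [map_sub, map_pow, map_pow, substXSqY, substAlgHom_X, substAlgHom_X, pow_mul]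
  simp [exponentsXSqY, ← X_pow_eq]

theorem coeff_reflectX (f : MvPowerSeries (Fin 2) R) (d : Fin 2 →₀ ℕ) :
    coeff d (reflectX R f) = (-1) ^ d 0 * coeff d f := by
  rw [reflectX, rescaleAlgHom_apply, coeff_rescale, prod_fintype _ _ (by simp), Fin.prod_univ_two]
  simp

theorem reflectX_involutive : Involutive (reflectX R) := fun f ↦ by
  ext d
  simp [coeff_reflectX, ← mul_assoc, ← mul_pow]

theorem range_substXSqY [NoZeroDivisors R] (h2 : (2 : R) ≠ 0) :
    Set.range (substXSqY R) = fixedPoints (reflectX R) := by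
  rw [substXSqY, coe_substAlgHom,
    range_subst_monomial_one injective_linearCombination_exponentsXSqY,
    range_linearCombination_exponentsXSqY]
  ext g
  simp only [Set.mem_ofPred_eq, mem_fixedPoints, IsFixedPt, MvPowerSeries.ext_iff, coeff_reflectX]
  refine forall_congr' fun e ↦ ?_
  rcases Nat.even_or_odd (e 0) with he | he
  · simp [he, he.neg_one_pow]
  · rw [he.neg_one_pow, neg_one_mul, neg_eq_iff_add_eq_zero, ← two_mul, mul_eq_zero,
      or_iff_right h2, imp_iff_right (Nat.not_even_iff_odd.mpr he)]

end

theorem stmt_9_general {k : Type*} [Field k] (h2 : (2 : k) ≠ 0) (K : ℕ)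
    (I : Ideal (MvPowerSeries (Fin 2) k))
    (hI : I = Ideal.span {(MvPowerSeries.X 1 : MvPowerSeries (Fin 2) k) ^ 2 -
      (MvPowerSeries.X 0 : MvPowerSeries (Fin 2) k) ^ (2 * K)})
    (J : Ideal (MvPowerSeries (Fin 2) k))
    (hJ : J = Ideal.span {(MvPowerSeries.X 1 : MvPowerSeries (Fin 2) k) ^ 2 -
      (MvPowerSeries.X 0 : MvPowerSeries (Fin 2) k) ^ K})
    (σ : (MvPowerSeries (Fin 2) k ⧸ I) ≃ₐ[k] (MvPowerSeries (Fin 2) k ⧸ I))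
    (hσ : ∀ f : MvPowerSeries (Fin 2) k,
      σ (Ideal.Quotient.mk I f) =
        Ideal.Quotient.mk I
          ((fun d => (-1 : k) ^ (d 0) * MvPowerSeries.coeff d f) :
            MvPowerSeries (Fin 2) k)) :
    ∃ i : (MvPowerSeries (Fin 2) k ⧸ J) →ₐ[k] (MvPowerSeries (Fin 2) k ⧸ I),
      (∀ f : MvPowerSeries (Fin 2) k,
        i (Ideal.Quotient.mk J f) =
          Ideal.Quotient.mk I
            ((fun d =>
              if d 0 % 2 = 0 then
                MvPowerSeries.coeff
                  (Finsupp.single (0 : Fin 2) (d 0 / 2) + Finsupp.single 1 (d 1)) f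
              else 0) : MvPowerSeries (Fin 2) k)) ∧
      Function.Injective i ∧
      Set.range i = {a | σ a = a} := by
  have hST : Set.range (substXSqY k) = fixedPoints (reflectX k) := range_substXSqY h2
  have hcomap : Ideal.comap (substXSqY k) I = J := by
    have hq : substXSqY k (X 1 ^ 2 - X 0 ^ K) ≠ 0 := by
      rw [substXSqY_X_sq_sub_X_pow]
      exact X_pow_sub_X_pow_ne_zero (by decide) two_ne_zero _
    rw [hI, hJ, ← substXSqY_X_sq_sub_X_pow]
    exact Ideal.comap_span_singleton_eq_of_range_eq_fixedPoints substXSqY_injective hST hq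
  refine ⟨Ideal.quotientMapₐ I (substXSqY k) hcomap.ge, fun f ↦ ?_,
    Ideal.quotientMap_injective' (H := hcomap.ge) hcomap.le, ?_⟩
  · exact congr_arg _ (MvPowerSeries.ext (coeff_substXSqY f))
  · have hπ : Surjective (Ideal.Quotient.mkₐ k I).toLinearMap := Ideal.Quotient.mk_surjective
    rw [← Ideal.Quotient.mk_surjective.range_comp]
    refine range_comp_eq_fixedPoints (S := substXSqY k) (T := (reflectX k).toLinearMap) h2
      reflectX_involutive hST hπ fun f ↦ ?_
    rw [AlgHom.toLinearMap_apply, Ideal.Quotient.mkₐ_eq_mk, hσ]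
    exact congr_arg _ (MvPowerSeries.ext fun d ↦ (coeff_reflectX f d).symm)

theorem stmt_9 {k : Type*} [Field k] (h2 : (2 : k) ≠ 0) (K : ℕ) (hK : 1 ≤ K)
    (r : ℕ) (hr : r = 2 * K - 1)
    (I : Ideal (MvPowerSeries (Fin 2) k))
    (hI : I = Ideal.span {(MvPowerSeries.X 1 : MvPowerSeries (Fin 2) k) ^ 2 -
      (MvPowerSeries.X 0 : MvPowerSeries (Fin 2) k) ^ (2 * K)})
    (J : Ideal (MvPowerSeries (Fin 2) k))
    (hJ : J = Ideal.span {(MvPowerSeries.X 1 : MvPowerSeries (Fin 2) k) ^ 2 -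
      (MvPowerSeries.X 0 : MvPowerSeries (Fin 2) k) ^ K})
    (σ : (MvPowerSeries (Fin 2) k ⧸ I) ≃ₐ[k] (MvPowerSeries (Fin 2) k ⧸ I))
    (hσ : ∀ f : MvPowerSeries (Fin 2) k,
      σ (Ideal.Quotient.mk I f) =
        Ideal.Quotient.mk I
          ((fun d => (-1 : k) ^ (d 0) * MvPowerSeries.coeff d f) :
            MvPowerSeries (Fin 2) k)) :
    ∃ i : (MvPowerSeries (Fin 2) k ⧸ J) →ₐ[k] (MvPowerSeries (Fin 2) k ⧸ I),
      (∀ f : MvPowerSeries (Fin 2) k,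
        i (Ideal.Quotient.mk J f) =
          Ideal.Quotient.mk I
            ((fun d =>
              if d 0 % 2 = 0 then
                MvPowerSeries.coeff
                  (Finsupp.single (0 : Fin 2) (d 0 / 2) + Finsupp.single 1 (d 1)) f
              else 0) : MvPowerSeries (Fin 2) k)) ∧
      Function.Injective i ∧
      Set.range i = {a | σ a = a} :=
  stmt_9_general h2 K I hI J hJ σ hσ
end

section
/- Let k be a field of characteristic ≠ 2 and k ≥ 1 a natural number; set r = 2k - 1. Let σ be the involution of A_r := k[[x,y]]/(y² - x^{2k}) defined by x ↦ -x, y ↦ -y. Then the k-algebra map i : k[[u,v]]/(v² - u^{k+1}) → k[[x,y]]/(y² - x^{2k}) given by u ↦ x², v ↦ xy is well-defined, injective, and its image equals the subring of σ-invariant elements of A_r. -/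
/-!
Write `x = X 0`, `y = X 1`. The substitution `u ↦ x², v ↦ xy` sends `u^a v^b` to
`x^(2a+b) y^b`, so on power series it is the extension of coefficients along the injective
exponent map `(a, b) ↦ (2a + b, b)`, whose image is `{(a, b) | b ≤ a, a ≡ b mod 2}`.

Division by `y² - xⁿ` (`n ≥ 1`) leaves a remainder of `y`-degree at most one, and this remainder
is unique. The substitution maps `v² - u^(K+1)` to `x² (y² - x^(2K))` and preserves `y`-degree
at most one, so uniqueness of remainders shows that the preimage of `I` is `J`: the induced map
is injective. A `σ`-invariant class is represented by its remainder `r`, and uniqueness forces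
`r(-x, -y) = r`; as `2 ≠ 0`, `r` has only monomials of even degree, and an even series of
`y`-degree at most one is supported on the image of the exponent map.
-/

namespace MvPowerSeries

variable {σ ι R : Type*} [CommSemiring R] (e : (σ →₀ ℕ) →+ (ι →₀ ℕ))

noncomputable def embDomain (f : MvPowerSeries σ R) : MvPowerSeries ι R :=
  Function.extend e (fun c => coeff c f) 0

variable {e}

theorem coeff_embDomain (he : Function.Injective e) (f : MvPowerSeries σ R)
    (c : σ →₀ ℕ) : coeff (e c) (embDomain e f) = coeff c f :=
  he.extend_apply _ _ c

theorem coeff_embDomain_of_notMem_range (f : MvPowerSeries σ R) {d : ι →₀ ℕ}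
    (hd : d ∉ Set.range e) : coeff d (embDomain e f) = 0 :=
  Function.extend_apply' _ _ d hd

theorem mem_range_of_coeff_embDomain_ne_zero {f : MvPowerSeries σ R} {d : ι →₀ ℕ}
    (hd : coeff d (embDomain e f) ≠ 0) : d ∈ Set.range e :=
  not_not.1 (mt (coeff_embDomain_of_notMem_range f) hd)

theorem embDomain_mul (he : Function.Injective e) (f g : MvPowerSeries σ R) :
    embDomain e (f * g) = embDomain e f * embDomain e g := by
  classical
  have mem_range {q : (ι →₀ ℕ) × (ι →₀ ℕ)}
      (hq : coeff q.1 (embDomain e f) * coeff q.2 (embDomain e g) ≠ 0) :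
      ∃ a b, q = (e a, e b) := by
    obtain ⟨a, ha⟩ := mem_range_of_coeff_embDomain_ne_zero (left_ne_zero_of_mul hq)
    obtain ⟨b, hb⟩ := mem_range_of_coeff_embDomain_ne_zero (right_ne_zero_of_mul hq)
    exact ⟨a, b, by rw [ha, hb]⟩
  ext d
  by_cases hd : d ∈ Set.range e
  · obtain ⟨c, rfl⟩ := hd
    rw [coeff_embDomain he, coeff_mul, coeff_mul]
    refine Finset.sum_of_injOn (Prod.map e e) (Prod.map_injective.2 ⟨he, he⟩).injOn
      (fun p hp => ?_) (fun q hq hqe => ?_) (fun p _ => ?_)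
    · rw [Finset.mem_coe, Finset.HasAntidiagonal.mem_antidiagonal] at hp
      simp [← map_add, hp]
    · by_contra hq0
      obtain ⟨a, b, rfl⟩ := mem_range hq0
      rw [Finset.HasAntidiagonal.mem_antidiagonal, ← map_add] at hq
      exact hqe ⟨(a, b), by simpa using he hq, rfl⟩
    · simp only [Prod.map, coeff_embDomain he]
  · rw [coeff_embDomain_of_notMem_range _ hd, coeff_mul, eq_comm]
    refine Finset.sum_eq_zero fun q hq => ?_
    by_contra hq0
    obtain ⟨a, b, rfl⟩ := mem_range hq0
    rw [Finset.HasAntidiagonal.mem_antidiagonal, ← map_add] at hq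
    exact hd ⟨_, hq⟩

theorem embDomain_monomial (he : Function.Injective e) (c : σ →₀ ℕ) (a : R) :
    embDomain e (monomial c a) = monomial (e c) a := by
  classical
  ext d
  by_cases hd : d ∈ Set.range e
  · obtain ⟨d, rfl⟩ := hd
    simp only [coeff_embDomain he, coeff_monomial, he.eq_iff]
  · rw [coeff_embDomain_of_notMem_range _ hd, coeff_monomial, if_neg (fun h => hd ⟨c, h.symm⟩)]

theorem embDomain_injective (he : Function.Injective e) :
    Function.Injective (embDomain (R := R) e) := fun f g h => by
  ext c
  rw [← coeff_embDomain he, h, coeff_embDomain he]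

theorem exists_embDomain_eq (he : Function.Injective e) {f : MvPowerSeries ι R}
    (hf : ∀ d ∉ Set.range e, coeff d f = 0) : ∃ g : MvPowerSeries σ R, embDomain e g = f := by
  let g : MvPowerSeries σ R := fun c => coeff (e c) f
  refine ⟨g, ext fun d => ?_⟩
  by_cases hd : d ∈ Set.range e
  · obtain ⟨c, rfl⟩ := hd
    exact coeff_embDomain he _ c
  · rw [coeff_embDomain_of_notMem_range _ hd, hf d hd]

noncomputable def embDomainAlgHom (he : Function.Injective e) :
    MvPowerSeries σ R →ₐ[R] MvPowerSeries ι R where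
  toFun := embDomain e
  map_one' := by simpa using embDomain_monomial he 0 (1 : R)
  map_mul' := embDomain_mul he
  map_zero' := by simpa using embDomain_monomial he 0 (0 : R)
  map_add' f g := by
    ext d
    by_cases hd : d ∈ Set.range e
    · obtain ⟨c, rfl⟩ := hd
      simp only [map_add, coeff_embDomain he]
    · simp only [map_add, coeff_embDomain_of_notMem_range _ hd, add_zero]
  commutes' a := by
    simpa [algebraMap_apply, monomial_zero_eq_C_apply] using embDomain_monomial he 0 a

end MvPowerSeries

namespace ASingularity

open MvPowerSeries Finsupp

variable {R : Type*} [CommRing R]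

noncomputable def exponent (a b : ℕ) : Fin 2 →₀ ℕ := single 0 a + single 1 b

@[simp] lemma exponent_apply_zero (a b : ℕ) : exponent a b 0 = a := by simp [exponent]

@[simp] lemma exponent_apply_one (a b : ℕ) : exponent a b 1 = b := by simp [exponent]

lemma ext_fin_two {d d' : Fin 2 →₀ ℕ} (h0 : d 0 = d' 0) (h1 : d 1 = d' 1) : d = d' :=
  Finsupp.ext (Fin.forall_fin_two.2 ⟨h0, h1⟩)

noncomputable def ySqSubXPow (n : ℕ) : MvPowerSeries (Fin 2) R := X 1 ^ 2 - X 0 ^ n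

def DegreeYLeOne (f : MvPowerSeries (Fin 2) R) : Prop :=
  ∀ d : Fin 2 →₀ ℕ, 2 ≤ d 1 → coeff d f = 0

lemma degreeYLeOne_zero : DegreeYLeOne (0 : MvPowerSeries (Fin 2) R) := fun _ _ => map_zero _

lemma coeff_add_single_mul_ySqSubXPow (n : ℕ) (h : MvPowerSeries (Fin 2) R) (d : Fin 2 →₀ ℕ) :
    coeff (d + single 1 2) (h * ySqSubXPow n) =
      coeff d h - if n ≤ d 0 then coeff (exponent (d 0 - n) (d 1 + 2)) h else 0 := by
  have hle : single 0 n ≤ d + single 1 2 ↔ n ≤ d 0 := by simp [single_le_iff]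
  rw [ySqSubXPow, mul_sub, map_sub, X_pow_eq, X_pow_eq, coeff_add_mul_monomial,
    coeff_mul_monomial, mul_one]
  have hexp : d + single 1 2 - single 0 n = exponent (d 0 - n) (d 1 + 2) :=
    ext_fin_two (by simp) (by simp)
  simp only [hle, hexp, mul_one]

lemma eq_zero_of_degreeYLeOne_mul {n : ℕ} (hn : 1 ≤ n) {h : MvPowerSeries (Fin 2) R}
    (hh : DegreeYLeOne (h * ySqSubXPow n)) : h = 0 := by
  suffices ∀ m (d : Fin 2 →₀ ℕ), d 0 = m → coeff d h = 0 by
    ext d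
    simpa using this _ d rfl
  intro m
  induction m using Nat.strong_induction_on with
  | _ m ih =>
    intro d hd
    have hrec := hh (d + single 1 2) (by simp)
    rw [coeff_add_single_mul_ySqSubXPow, sub_eq_zero] at hrec
    rw [hrec]
    split_ifs with hnd
    · exact ih _ (by simp; omega) _ rfl
    · rfl

lemma eq_of_degreeYLeOne_of_sub_mem {n : ℕ} (hn : 1 ≤ n) {f g : MvPowerSeries (Fin 2) R}
    (hf : DegreeYLeOne f) (hg : DegreeYLeOne g) (hfg : f - g ∈ Ideal.span {ySqSubXPow n}) :
    f = g := by
  obtain ⟨c, hc⟩ := Ideal.mem_span_singleton'.1 hfg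
  have hc0 : c = 0 := eq_zero_of_degreeYLeOne_mul hn fun d hd => by
    rw [hc, map_sub, hf d hd, hg d hd, sub_zero]
  rwa [hc0, zero_mul, eq_comm, sub_eq_zero] at hc

-- Trading each `y ^ 2` for `x ^ n` until the `y`-degree drops below two gives these finite sums.
noncomputable def divYSq (n : ℕ) (f : MvPowerSeries (Fin 2) R) : MvPowerSeries (Fin 2) R :=
  fun d => ∑ s ∈ Finset.range (d 0 / n + 1), coeff (exponent (d 0 - n * s) (d 1 + 2 + 2 * s)) f

lemma coeff_divYSq {n : ℕ} (hn : 1 ≤ n) (f : MvPowerSeries (Fin 2) R) (d : Fin 2 →₀ ℕ) :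
    coeff d (divYSq n f) = coeff (d + single 1 2) f +
      if n ≤ d 0 then coeff (exponent (d 0 - n) (d 1 + 2)) (divYSq n f) else 0 := by
  simp only [divYSq, coeff_apply]
  rw [Finset.sum_range_succ', add_comm]
  congr 1
  · exact congrArg (coeff · f) (ext_fin_two (by simp) (by simp))
  split_ifs with hnd
  · simp only [exponent_apply_zero, exponent_apply_one]
    rw [show (d 0 - n) / n + 1 = d 0 / n by
      rw [← Nat.add_div_right _ (by omega), Nat.sub_add_cancel hnd]]
    refine Finset.sum_congr rfl fun s _ => congrArg (coeff · f) (ext_fin_two ?_ ?_) <;>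
      simp only [exponent_apply_zero, exponent_apply_one]
    · rw [Nat.sub_sub, mul_add_one, add_comm]
    · ring
  · rw [Nat.div_eq_of_lt (by omega), Finset.sum_range_zero]

lemma degreeYLeOne_sub_divYSq_mul {n : ℕ} (hn : 1 ≤ n) (f : MvPowerSeries (Fin 2) R) :
    DegreeYLeOne (f - divYSq n f * ySqSubXPow n) := by
  intro e he
  obtain ⟨d, rfl⟩ : ∃ d, e = d + single 1 2 :=
    ⟨e - single 1 2, (tsub_add_cancel_of_le (single_le_iff.2 he)).symm⟩
  rw [map_sub, coeff_add_single_mul_ySqSubXPow, coeff_divYSq hn, add_sub_cancel_right, sub_self]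

lemma exists_eq_mul_ySqSubXPow_add {n : ℕ} (hn : 1 ≤ n) (f : MvPowerSeries (Fin 2) R) :
    ∃ w r, DegreeYLeOne r ∧ f = w * ySqSubXPow n + r :=
  ⟨divYSq n f, _, degreeYLeOne_sub_divYSq_mul hn f, by ring⟩

noncomputable def exponentMap : (Fin 2 →₀ ℕ) →+ (Fin 2 →₀ ℕ) where
  toFun c := exponent (2 * c 0 + c 1) (c 1)
  map_zero' := ext_fin_two (by simp) (by simp)
  map_add' a b := ext_fin_two (by simp; ring) (by simp)

@[simp] lemma exponentMap_apply_zero (c : Fin 2 →₀ ℕ) : exponentMap c 0 = 2 * c 0 + c 1 :=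
  exponent_apply_zero _ _

@[simp] lemma exponentMap_apply_one (c : Fin 2 →₀ ℕ) : exponentMap c 1 = c 1 :=
  exponent_apply_one _ _

lemma exponentMap_injective : Function.Injective exponentMap := fun a b h => by
  have h0 := congrArg (· 0) h
  have h1 := congrArg (· 1) h
  simp only [exponentMap_apply_zero, exponentMap_apply_one] at h0 h1
  exact ext_fin_two (by omega) h1

lemma mem_range_exponentMap_iff (d : Fin 2 →₀ ℕ) :
    d ∈ Set.range exponentMap ↔ d 1 ≤ d 0 ∧ (d 0 - d 1) % 2 = 0 := by
  constructor
  · rintro ⟨c, rfl⟩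
    simp only [exponentMap_apply_zero, exponentMap_apply_one]
    omega
  · rintro ⟨hle, heven⟩
    exact ⟨exponent ((d 0 - d 1) / 2) (d 1), ext_fin_two (by simp; omega) (by simp)⟩

noncomputable def uvSubst : MvPowerSeries (Fin 2) R →ₐ[R] MvPowerSeries (Fin 2) R :=
  embDomainAlgHom exponentMap_injective

lemma coeff_exponentMap_uvSubst (f : MvPowerSeries (Fin 2) R) (c : Fin 2 →₀ ℕ) :
    coeff (exponentMap c) (uvSubst f) = coeff c f :=
  coeff_embDomain exponentMap_injective f c

lemma coeff_uvSubst_of_notMem_range (f : MvPowerSeries (Fin 2) R) {d : Fin 2 →₀ ℕ}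
    (hd : d ∉ Set.range exponentMap) : coeff d (uvSubst f) = 0 :=
  coeff_embDomain_of_notMem_range f hd

lemma uvSubst_monomial (c : Fin 2 →₀ ℕ) (a : R) :
    uvSubst (monomial c a) = monomial (exponentMap c) a :=
  embDomain_monomial exponentMap_injective c a

lemma uvSubst_injective : Function.Injective (uvSubst : MvPowerSeries (Fin 2) R → _) :=
  embDomain_injective exponentMap_injective

lemma uvSubst_apply (f : MvPowerSeries (Fin 2) R) :
    uvSubst f = (fun d => if d 1 ≤ d 0 ∧ (d 0 - d 1) % 2 = 0 then
      coeff (single 0 ((d 0 - d 1) / 2) + single 1 (d 1)) f else 0 : MvPowerSeries (Fin 2) R) := by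
  ext d
  change _ = if d 1 ≤ d 0 ∧ (d 0 - d 1) % 2 = 0 then _ else _
  split_ifs with hd
  · obtain ⟨c, rfl⟩ := (mem_range_exponentMap_iff d).2 hd
    rw [coeff_exponentMap_uvSubst]
    exact congrArg (coeff · f) (ext_fin_two (by simp) (by simp))
  · exact coeff_uvSubst_of_notMem_range f (mt (mem_range_exponentMap_iff d).1 hd)

lemma uvSubst_X_zero : uvSubst (X 0 : MvPowerSeries (Fin 2) R) = X 0 ^ 2 := by
  rw [X_pow_eq, X_def, uvSubst_monomial]
  exact congrArg (monomial · 1) (ext_fin_two (by simp) (by simp))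

lemma uvSubst_X_one : uvSubst (X 1 : MvPowerSeries (Fin 2) R) = X 0 * X 1 := by
  rw [X_def, X_def, uvSubst_monomial, monomial_mul_monomial, one_mul]
  exact congrArg (monomial · 1) (ext_fin_two (by simp) (by simp))

lemma uvSubst_ySqSubXPow (K : ℕ) :
    uvSubst (ySqSubXPow (K + 1) : MvPowerSeries (Fin 2) R) = X 0 ^ 2 * ySqSubXPow (2 * K) := by
  rw [ySqSubXPow, ySqSubXPow, map_sub, map_pow, map_pow, uvSubst_X_zero, uvSubst_X_one]
  ring

lemma DegreeYLeOne.uvSubst {r : MvPowerSeries (Fin 2) R} (hr : DegreeYLeOne r) :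
    DegreeYLeOne (uvSubst r) := by
  intro d hd
  by_cases hdr : d ∈ Set.range exponentMap
  · obtain ⟨c, rfl⟩ := hdr
    rw [coeff_exponentMap_uvSubst]
    exact hr c (by simpa using hd)
  · exact coeff_uvSubst_of_notMem_range r hdr

noncomputable def negVars (f : MvPowerSeries (Fin 2) R) : MvPowerSeries (Fin 2) R :=
  fun d => (-1) ^ (d 0 + d 1) * coeff d f

lemma coeff_negVars (f : MvPowerSeries (Fin 2) R) (d : Fin 2 →₀ ℕ) :
    coeff d (negVars f) = (-1) ^ (d 0 + d 1) * coeff d f :=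
  rfl

lemma DegreeYLeOne.negVars {r : MvPowerSeries (Fin 2) R} (hr : DegreeYLeOne r) :
    DegreeYLeOne (negVars r) := fun d hd => by
  rw [coeff_negVars, hr d hd, mul_zero]

lemma negVars_uvSubst (f : MvPowerSeries (Fin 2) R) : negVars (uvSubst f) = uvSubst f := by
  ext d
  rw [coeff_negVars]
  by_cases hd : d ∈ Set.range exponentMap
  · obtain ⟨c, rfl⟩ := hd
    have heven : Even (exponentMap c 0 + exponentMap c 1) :=
      ⟨c 0 + c 1, by simp only [exponentMap_apply_zero, exponentMap_apply_one]; ring⟩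
    rw [heven.neg_one_pow, one_mul]
  · rw [coeff_uvSubst_of_notMem_range f hd, mul_zero]

lemma mem_range_uvSubst_of_negVars_eq [NoZeroDivisors R] (h2 : (2 : R) ≠ 0)
    {r : MvPowerSeries (Fin 2) R} (hr : DegreeYLeOne r) (hneg : negVars r = r) :
    r ∈ Set.range uvSubst := by
  refine exists_embDomain_eq exponentMap_injective fun d hd => ?_
  rw [mem_range_exponentMap_iff] at hd
  by_cases hd1 : 2 ≤ d 1
  · exact hr d hd1
  have hodd : Odd (d 0 + d 1) := Nat.odd_iff.2 (by omega)
  have hcoeff := congrArg (coeff d) hneg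
  rw [coeff_negVars, hodd.neg_one_pow, neg_one_mul, neg_eq_iff_add_eq_zero, ← two_mul] at hcoeff
  exact (mul_eq_zero.1 hcoeff).resolve_left h2

theorem comap_uvSubst_span {K : ℕ} (hK : 1 ≤ K) :
    Ideal.comap uvSubst (Ideal.span {ySqSubXPow (2 * K)}) =
      Ideal.span ({ySqSubXPow (K + 1)} : Set (MvPowerSeries (Fin 2) R)) := by
  refine le_antisymm (fun f hf => ?_) ?_
  · obtain ⟨w, r, hr, rfl⟩ := exists_eq_mul_ySqSubXPow_add (n := K + 1) (by omega) f
    rw [Ideal.mem_comap, map_add, map_mul, uvSubst_ySqSubXPow] at hf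
    have hmem : uvSubst r ∈ Ideal.span {ySqSubXPow (2 * K)} :=
      (Ideal.add_mem_iff_right _ (Ideal.mul_mem_left _ _
        (Ideal.mul_mem_left _ _ (Ideal.mem_span_singleton_self _)))).1 hf
    have hr0 : r = 0 := uvSubst_injective <| by
      rw [map_zero]
      exact eq_of_degreeYLeOne_of_sub_mem (n := 2 * K) (by omega) hr.uvSubst degreeYLeOne_zero
        (by rwa [sub_zero])
    rw [hr0, add_zero]
    exact Ideal.mul_mem_left _ _ (Ideal.mem_span_singleton_self _)
  · rw [Ideal.span_le, Set.singleton_subset_iff, SetLike.mem_coe, Ideal.mem_comap,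
      uvSubst_ySqSubXPow]
    exact Ideal.mul_mem_left _ _ (Ideal.mem_span_singleton_self _)

end ASingularity

open ASingularity in
theorem stmt_10_general {k : Type*} [Field k] (h2 : (2 : k) ≠ 0) (K : ℕ) (hK : 1 ≤ K)
    (I : Ideal (MvPowerSeries (Fin 2) k))
    (hI : I = Ideal.span {(MvPowerSeries.X 1 : MvPowerSeries (Fin 2) k) ^ 2 -
      (MvPowerSeries.X 0 : MvPowerSeries (Fin 2) k) ^ (2 * K)})
    (J : Ideal (MvPowerSeries (Fin 2) k))
    (hJ : J = Ideal.span {(MvPowerSeries.X 1 : MvPowerSeries (Fin 2) k) ^ 2 -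
      (MvPowerSeries.X 0 : MvPowerSeries (Fin 2) k) ^ (K + 1)})
    (σ : (MvPowerSeries (Fin 2) k ⧸ I) ≃ₐ[k] (MvPowerSeries (Fin 2) k ⧸ I))
    (hσ : ∀ f : MvPowerSeries (Fin 2) k,
      σ (Ideal.Quotient.mk I f) =
        Ideal.Quotient.mk I
          ((fun d => (-1 : k) ^ (d 0 + d 1) * MvPowerSeries.coeff d f) :
            MvPowerSeries (Fin 2) k)) :
    ∃ i : (MvPowerSeries (Fin 2) k ⧸ J) →ₐ[k] (MvPowerSeries (Fin 2) k ⧸ I),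
      (∀ f : MvPowerSeries (Fin 2) k,
        i (Ideal.Quotient.mk J f) =
          Ideal.Quotient.mk I
            ((fun d =>
              if d 1 ≤ d 0 ∧ (d 0 - d 1) % 2 = 0 then
                MvPowerSeries.coeff
                  (Finsupp.single (0 : Fin 2) ((d 0 - d 1) / 2) + Finsupp.single 1 (d 1)) f
              else 0) : MvPowerSeries (Fin 2) k)) ∧
      Function.Injective i ∧
      Set.range i = {a | σ a = a} := by
  change I = Ideal.span {ySqSubXPow (2 * K)} at hI
  change J = Ideal.span {ySqSubXPow (K + 1)} at hJ
  subst hI hJ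
  have hcomap := comap_uvSubst_span (R := k) hK
  refine ⟨Ideal.quotientMapₐ _ uvSubst hcomap.ge,
    fun f => by rw [Ideal.quotient_map_mkₐ, Ideal.Quotient.mkₐ_eq_mk, uvSubst_apply],
    Ideal.quotientMap_injective' (H := hcomap.ge) hcomap.le, ?_⟩
  ext a
  constructor
  · rintro ⟨b, rfl⟩
    obtain ⟨f, rfl⟩ := Ideal.Quotient.mk_surjective b
    exact (hσ (uvSubst f)).trans (congrArg _ (negVars_uvSubst f))
  · intro ha
    obtain ⟨g, rfl⟩ := Ideal.Quotient.mk_surjective a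
    obtain ⟨w, r, hr, rfl⟩ := exists_eq_mul_ySqSubXPow_add (n := 2 * K) (by omega) g
    have hmk : Ideal.Quotient.mk (Ideal.span {ySqSubXPow (2 * K)})
        (w * ySqSubXPow (2 * K) + r) = Ideal.Quotient.mk _ r :=
      Ideal.Quotient.eq.2 (by simpa using Ideal.mul_mem_left _ w (Ideal.mem_span_singleton_self _))
    rw [Set.mem_ofPred_eq, hmk, hσ] at ha
    have hneg : negVars r = r :=
      eq_of_degreeYLeOne_of_sub_mem (by omega) hr.negVars hr (Ideal.Quotient.eq.1 ha)
    obtain ⟨f, hf⟩ := mem_range_uvSubst_of_negVars_eq h2 hr hneg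
    exact ⟨Ideal.Quotient.mk _ f, by rw [Ideal.quotient_map_mkₐ, hf, hmk]; rfl⟩

theorem stmt_10 {k : Type*} [Field k] (h2 : (2 : k) ≠ 0) (K : ℕ) (hK : 1 ≤ K)
    (r : ℕ) (hr : r = 2 * K - 1)
    (I : Ideal (MvPowerSeries (Fin 2) k))
    (hI : I = Ideal.span {(MvPowerSeries.X 1 : MvPowerSeries (Fin 2) k) ^ 2 -
      (MvPowerSeries.X 0 : MvPowerSeries (Fin 2) k) ^ (2 * K)})
    (J : Ideal (MvPowerSeries (Fin 2) k))
    (hJ : J = Ideal.span {(MvPowerSeries.X 1 : MvPowerSeries (Fin 2) k) ^ 2 -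
      (MvPowerSeries.X 0 : MvPowerSeries (Fin 2) k) ^ (K + 1)})
    (σ : (MvPowerSeries (Fin 2) k ⧸ I) ≃ₐ[k] (MvPowerSeries (Fin 2) k ⧸ I))
    (hσ : ∀ f : MvPowerSeries (Fin 2) k,
      σ (Ideal.Quotient.mk I f) =
        Ideal.Quotient.mk I
          ((fun d => (-1 : k) ^ (d 0 + d 1) * MvPowerSeries.coeff d f) :
            MvPowerSeries (Fin 2) k)) :
    ∃ i : (MvPowerSeries (Fin 2) k ⧸ J) →ₐ[k] (MvPowerSeries (Fin 2) k ⧸ I),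
      (∀ f : MvPowerSeries (Fin 2) k,
        i (Ideal.Quotient.mk J f) =
          Ideal.Quotient.mk I
            ((fun d =>
              if d 1 ≤ d 0 ∧ (d 0 - d 1) % 2 = 0 then
                MvPowerSeries.coeff
                  (Finsupp.single (0 : Fin 2) ((d 0 - d 1) / 2) + Finsupp.single 1 (d 1)) f
              else 0) : MvPowerSeries (Fin 2) k)) ∧
      Function.Injective i ∧
      Set.range i = {a | σ a = a} :=
  stmt_10_general h2 K hK I hI J hJ σ hσ
end
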